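/- arXiv:1510.03290 — 2 statements merged into one kernel-verified Lean document; each statement's English description precedes it below -/
import Mathlib

section
/- If 0 → K → F → G → 0 and 0 → K' → F' → G → 0 are two free presentations of a group G, then the quotients (K ∩ [F,F])/[K,F] and (K' ∩ [F',F'])/[K',F'] are isomorphic (independence of the Hopf formula from the chosen presentation). -/
/-!
Lift the identity of `G` along the two presentations: freeness of `F` and surjectivity of
`F' → G` give `φ : F → F'` over `G`, and symmetrically `ψ : F' → F`. Any such map sends
`K ⊓ [F,F]` into `K' ⊓ [F',F']` and `[K,F]` into `[K',F']`, so it induces a map of Hopf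
quotients, functorially. The induced map does not depend on the lift: two lifts differ by
elements of `K'`, which are central modulo `[K',F']`, and commutators do not see central factors.
Hence `ψ ∘ φ` and `φ ∘ ψ` induce the identity.
-/

open scoped commutatorElement

theorem commutatorElement_mul_mul_of_mem_center {Q : Type*} [Group Q] (a b : Q) {z w : Q}
    (hz : z ∈ Subgroup.center Q) (hw : w ∈ Subgroup.center Q) : ⁅a * z, b * w⁆ = ⁅a, b⁆ := by
  have hz' := Subgroup.mem_center_iff.1 hz
  have hw' := Subgroup.mem_center_iff.1 hw
  calc ⁅a * z, b * w⁆ = a * (z * b) * (w * z⁻¹) * a⁻¹ * w⁻¹ * b⁻¹ := by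
        simp only [commutatorElement_def]; group
    _ = a * b * (w * a⁻¹) * w⁻¹ * b⁻¹ := by rw [← hz' b, ← hw' z⁻¹]; group
    _ = ⁅a, b⁆ := by rw [← hw' a⁻¹, commutatorElement_def]; group

theorem QuotientGroup.map_mk'_le_center {F : Type*} [Group F] (H : Subgroup F)
    [⁅H, (⊤ : Subgroup F)⁆.Normal] :
    H.map (QuotientGroup.mk' ⁅H, ⊤⁆) ≤ Subgroup.center (F ⧸ ⁅H, (⊤ : Subgroup F)⁆) := by
  rw [← Subgroup.commutator_top_right_eq_bot_iff_le_center,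
    ← Subgroup.map_top_of_surjective _ (QuotientGroup.mk'_surjective _), ← Subgroup.map_commutator,
    QuotientGroup.map_mk'_self]

theorem MonoidHom.map_commutator_le {F₁ F₂ : Type*} [Group F₁] [Group F₂] (φ : F₁ →* F₂) :
    (commutator F₁).map φ ≤ commutator F₂ := by
  rw [map_commutator_eq]
  exact Subgroup.commutator_mono le_top le_top

theorem FreeGroup.exists_comp_eq_of_surjective {α H G : Type*} [Group H] [Group G]
    (f : FreeGroup α →* G) {g : H →* G} (hg : Function.Surjective g) :
    ∃ φ : FreeGroup α →* H, g.comp φ = f :=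
  ⟨FreeGroup.lift fun a => Function.surjInv hg (f (FreeGroup.of a)),
    FreeGroup.ext_hom _ _ fun a => by simp [Function.surjInv_eq hg]⟩

namespace MonoidHom

variable {F F₁ F₂ F₃ G : Type*} [Group F] [Group F₁] [Group F₂] [Group F₃] [Group G]

abbrev HopfQuotient (f : F →* G) : Type _ :=
  ↥(f.ker ⊓ commutator F) ⧸ (⁅f.ker, (⊤ : Subgroup F)⁆.subgroupOf (f.ker ⊓ commutator F))

variable {f₁ : F₁ →* G} {f₂ : F₂ →* G} {f₃ : F₃ →* G}

theorem ker_le_comap_ker {φ : F₁ →* F₂} (hφ : f₂.comp φ = f₁) : f₁.ker ≤ f₂.ker.comap φ := by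
  rw [comap_ker, hφ]

theorem commutator_ker_top_le_comap {φ : F₁ →* F₂} (hφ : f₂.comp φ = f₁) :
    ⁅f₁.ker, (⊤ : Subgroup F₁)⁆ ≤ ⁅f₂.ker, (⊤ : Subgroup F₂)⁆.comap φ := by
  rw [← Subgroup.map_le_iff_le_comap, Subgroup.map_commutator]
  exact Subgroup.commutator_mono (Subgroup.map_le_iff_le_comap.2 (ker_le_comap_ker hφ)) le_top

theorem ker_inf_commutator_le_comap {φ : F₁ →* F₂} (hφ : f₂.comp φ = f₁) :
    f₁.ker ⊓ commutator F₁ ≤ (f₂.ker ⊓ commutator F₂).comap φ := by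
  rw [Subgroup.comap_inf]
  exact inf_le_inf (ker_le_comap_ker hφ) (Subgroup.map_le_iff_le_comap.1 (map_commutator_le φ))

def hopfMap (φ : F₁ →* F₂) (hφ : f₂.comp φ = f₁) : HopfQuotient f₁ →* HopfQuotient f₂ :=
  QuotientGroup.map _ _
    ((φ.domRestrict _).codRestrict _ fun x => ker_inf_commutator_le_comap hφ x.2)
    fun _ hx => commutator_ker_top_le_comap hφ hx

theorem hopfMap_id : hopfMap (MonoidHom.id F₁) (comp_id f₁) = MonoidHom.id _ := by
  ext
  rfl

theorem hopfMap_comp {φ : F₁ →* F₂} {ψ : F₂ →* F₃} (hφ : f₂.comp φ = f₁) (hψ : f₃.comp ψ = f₂) :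
    (hopfMap ψ hψ).comp (hopfMap φ hφ) = hopfMap (ψ.comp φ) (by rw [← comp_assoc, hψ, hφ]) := by
  ext
  rfl

theorem mk_apply_eq_of_mem_commutator {φ ψ : F₁ →* F₂} (hφ : f₂.comp φ = f₁)
    (hψ : f₂.comp ψ = f₁) {x : F₁} (hx : x ∈ commutator F₁) :
    (φ x : F₂ ⧸ ⁅f₂.ker, (⊤ : Subgroup F₂)⁆) = ψ x := by
  set π := QuotientGroup.mk' ⁅f₂.ker, (⊤ : Subgroup F₂)⁆
  have hcentral (y : F₁) : (π (φ y))⁻¹ * π (ψ y) ∈ Subgroup.center _ := by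
    refine QuotientGroup.map_mk'_le_center _ ⟨(φ y)⁻¹ * ψ y, ?_, by rw [map_mul, map_inv]⟩
    rw [SetLike.mem_coe, mem_ker, map_mul, map_inv, ← comp_apply, ← comp_apply, hφ, hψ,
      inv_mul_cancel]
  suffices commutator F₁ ≤ (π.comp φ).eqLocus (π.comp ψ) from this hx
  rw [commutator_def, Subgroup.commutator_le]
  rintro a - b -
  change π (φ ⁅a, b⁆) = π (ψ ⁅a, b⁆)
  simp only [map_commutatorElement]
  rw [← mul_inv_cancel_left (π (φ a)) (π (ψ a)), ← mul_inv_cancel_left (π (φ b)) (π (ψ b)),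
    commutatorElement_mul_mul_of_mem_center _ _ (hcentral a) (hcentral b)]

theorem hopfMap_eq_of_comp_eq {φ ψ : F₁ →* F₂} (hφ : f₂.comp φ = f₁) (hψ : f₂.comp ψ = f₁) :
    hopfMap φ hφ = hopfMap ψ hψ := by
  ext x
  exact QuotientGroup.eq.2 <| Subgroup.mem_subgroupOf.2 <|
    QuotientGroup.eq.1 (mk_apply_eq_of_mem_commutator hφ hψ x.2.2)

def hopfQuotientEquiv {φ : F₁ →* F₂} {ψ : F₂ →* F₁} (hφ : f₂.comp φ = f₁) (hψ : f₁.comp ψ = f₂) :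
    HopfQuotient f₁ ≃* HopfQuotient f₂ :=
  (hopfMap φ hφ).toMulEquiv (hopfMap ψ hψ)
    (by rw [hopfMap_comp, hopfMap_eq_of_comp_eq _ (comp_id f₁), hopfMap_id])
    (by rw [hopfMap_comp, hopfMap_eq_of_comp_eq _ (comp_id f₂), hopfMap_id])

end MonoidHom

/-- If `0 → K → F → G → 0` and `0 → K' → F' → G → 0` are two free presentations of a group
`G`, then `(K ⊓ [F,F])/[K,F]` and `(K' ⊓ [F',F'])/[K',F']` are isomorphic. -/
theorem hopf_formula_independent_of_presentation
    (α α' : Type*) (G : Type*) [Group G]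
    (f : FreeGroup α →* G) (hf : Function.Surjective f)
    (f' : FreeGroup α' →* G) (hf' : Function.Surjective f') :
    Nonempty
      ((↥(f.ker ⊓ commutator (FreeGroup α)) ⧸
          (⁅f.ker, (⊤ : Subgroup (FreeGroup α))⁆.subgroupOf
            (f.ker ⊓ commutator (FreeGroup α)))) ≃*
       (↥(f'.ker ⊓ commutator (FreeGroup α')) ⧸
          (⁅f'.ker, (⊤ : Subgroup (FreeGroup α'))⁆.subgroupOf
            (f'.ker ⊓ commutator (FreeGroup α'))))) := by
  obtain ⟨φ, hφ⟩ := FreeGroup.exists_comp_eq_of_surjective f hf'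
  obtain ⟨ψ, hψ⟩ := FreeGroup.exists_comp_eq_of_surjective f' hf
  exact ⟨MonoidHom.hopfQuotientEquiv hφ hψ⟩
end

section
/- The kernel functor, sending a split short exact sequence to its kernel, reflects the following: if I : Grp → Grp is the functor sending a group to its center, then I is not protoadditive; concretely, there is a split short exact sequence 0 → K → A ⇄ B → 0 of groups such that Z(K) → Z(A) → Z(B) fails to be a split short exact sequence. -/
/-- Section of the sign homomorphism on `Perm (Fin 3)`. -/
def signSection : ℤˣ →* Equiv.Perm (Fin 3) where
  toFun u := if u = 1 then 1 else Equiv.swap 0 1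
  map_one' := if_pos rfl
  map_mul' := by decide

lemma no_central_odd :
    ¬ ∃ z : Equiv.Perm (Fin 3), (∀ g, g * z = z * g) ∧ Equiv.Perm.sign z = -1 := by
  decide

/-- The center functor `Z : Grp → Grp` is not protoadditive: there is a split short exact
sequence `0 → K → A ⇄ B → 0` of groups such that the sequence
`Z(K) → Z(A) → Z(B)` fails to be a (split) short exact sequence: either the image of
`Z(A)` under `f` is not all of `Z(B)`, or the image of `Z(K)` in `A` is not `Z(A) ⊓ K`. -/
theorem center_functor_not_protoadditive :
    ∃ (A B : Type) (_ : Group A) (_ : Group B) (f : A →* B) (s : B →* A),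
      Function.Surjective f ∧ f.comp s = MonoidHom.id B ∧
        ¬ ((Subgroup.center A).map f = Subgroup.center B ∧
            (Subgroup.center f.ker).map f.ker.subtype = Subgroup.center A ⊓ f.ker) := by
  refine ⟨Equiv.Perm (Fin 3), ℤˣ, inferInstance, inferInstance, Equiv.Perm.sign,
    signSection, ?_, ?_, ?_⟩
  · intro u
    rcases Int.units_eq_one_or u with rfl | rfl
    · exact ⟨1, by simp⟩
    · exact ⟨Equiv.swap 0 1, by simp [Equiv.Perm.sign_swap]⟩
  · ext u
    rcases Int.units_eq_one_or u with rfl | rfl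
    · simp [signSection]
    · simp [signSection, Equiv.Perm.sign_swap]
  · rintro ⟨h1, -⟩
    have hneg : (-1 : ℤˣ) ∈ Subgroup.center ℤˣ := by
      rw [Subgroup.mem_center_iff]; intro g; exact mul_comm g _
    rw [← h1] at hneg
    obtain ⟨z, hz, hzs⟩ := hneg
    exact no_central_odd ⟨z, fun g => (Subgroup.mem_center_iff.mp hz g), hzs⟩
end
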